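/- arXiv:2504.03910 — 3 statements merged into one kernel-verified Lean document; each statement's English description precedes it below -/
import Mathlib

section
/- Let H be a graph on V, k a positive integer, and F = {S : ∅ ≠ S ⊂ V, d_H(S) < k}. Then F is sparse: every S ∈ F crosses at most one F-core. (Since cores of F are pairwise disjoint, if S crossed two cores C₁, C₂ then d_H(S) ≥ d_H(C₁ ∩ S, C₁ \ S) + d_H(C₂ ∩ S, C₂ \ S) ≥ 2⌈(k+1)/2⌉ ≥ k + 1, contradicting d_H(S) < k.) -/
open Finset

variable {V : Type*} [Fintype V] [DecidableEq V] {ε : Type*} [DecidableEq ε]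

/-- `cutDeg E ends S` = number of edges of the multigraph with exactly one endpoint in `S`. -/
def cutDeg (E : Finset ε) (ends : ε → V × V) (S : Finset V) : ℕ :=
  (E.filter (fun e => ((ends e).1 ∈ S ∧ (ends e).2 ∉ S) ∨ ((ends e).2 ∈ S ∧ (ends e).1 ∉ S))).card

/-- `deg2 E ends X Y` = number of edges with one endpoint in `X` and the other in `Y`. -/
def deg2 (E : Finset ε) (ends : ε → V × V) (X Y : Finset V) : ℕ :=
  (E.filter (fun e => ((ends e).1 ∈ X ∧ (ends e).2 ∈ Y) ∨ ((ends e).1 ∈ Y ∧ (ends e).2 ∈ X))).card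

/-- Two sets cross. -/
def Crosses (A B : Finset V) : Prop :=
  (A ∩ B).Nonempty ∧ (Finset.univ \ (A ∪ B)).Nonempty ∧ (A \ B).Nonempty ∧ (B \ A).Nonempty

/-- An inclusion-minimal member of `F`. -/
def IsCore (F : Set (Finset V)) (C : Finset V) : Prop :=
  C ∈ F ∧ ∀ A ∈ F, A ⊆ C → A = C

/-- The family of cuts of size `< k`. -/
def smallCuts (E : Finset ε) (ends : ε → V × V) (k : ℕ) : Set (Finset V) :=
  {S | S.Nonempty ∧ S ≠ Finset.univ ∧ cutDeg E ends S < k}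

set_option linter.unusedSectionVars false

lemma key_identity (E : Finset ε) (ends : ε → V × V) (C S : Finset V) :
    cutDeg E ends (C ∩ S) + cutDeg E ends (C \ S)
      = cutDeg E ends C + 2 * deg2 E ends (C ∩ S) (C \ S) := by
  classical
  simp only [cutDeg, deg2, Finset.card_filter]
  rw [← Finset.sum_add_distrib, Finset.mul_sum, ← Finset.sum_add_distrib]
  refine Finset.sum_congr rfl fun e _ => ?_
  simp only [Finset.mem_inter, Finset.mem_sdiff]
  by_cases h1 : (ends e).1 ∈ C <;> by_cases h2 : (ends e).1 ∈ S <;>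
    by_cases h3 : (ends e).2 ∈ C <;> by_cases h4 : (ends e).2 ∈ S <;>
    simp [h1, h2, h3, h4]

lemma posimod (E : Finset ε) (ends : ε → V × V) (A B : Finset V) :
    cutDeg E ends (A \ B) + cutDeg E ends (B \ A)
      ≤ cutDeg E ends A + cutDeg E ends B := by
  classical
  simp only [cutDeg, Finset.card_filter]
  rw [← Finset.sum_add_distrib, ← Finset.sum_add_distrib]
  refine Finset.sum_le_sum fun e _ => ?_
  simp only [Finset.mem_sdiff]
  by_cases h1 : (ends e).1 ∈ A <;> by_cases h2 : (ends e).1 ∈ B <;>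
    by_cases h3 : (ends e).2 ∈ A <;> by_cases h4 : (ends e).2 ∈ B <;>
    simp [h1, h2, h3, h4]

lemma two_cores_bound (E : Finset ε) (ends : ε → V × V) (C₁ C₂ S : Finset V)
    (hd : Disjoint C₁ C₂) :
    deg2 E ends (C₁ ∩ S) (C₁ \ S) + deg2 E ends (C₂ ∩ S) (C₂ \ S) ≤ cutDeg E ends S := by
  classical
  simp only [cutDeg, deg2, Finset.card_filter]
  rw [← Finset.sum_add_distrib]
  refine Finset.sum_le_sum fun e _ => ?_
  have hd1 : (ends e).1 ∈ C₁ → (ends e).1 ∉ C₂ := fun h => Finset.disjoint_left.mp hd h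
  have hd2 : (ends e).2 ∈ C₁ → (ends e).2 ∉ C₂ := fun h => Finset.disjoint_left.mp hd h
  simp only [Finset.mem_inter, Finset.mem_sdiff]
  by_cases a1 : (ends e).1 ∈ C₁ <;> by_cases a2 : (ends e).1 ∈ C₂ <;>
    by_cases a3 : (ends e).2 ∈ C₁ <;> by_cases a4 : (ends e).2 ∈ C₂ <;>
    by_cases a5 : (ends e).1 ∈ S <;> by_cases a6 : (ends e).2 ∈ S <;>
    simp_all

lemma ne_univ_of_subset {A B : Finset V} (h : A ⊆ B) (hB : B ≠ Finset.univ) :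
    A ≠ Finset.univ := fun hA => hB (Finset.univ_subset_iff.mp (hA ▸ h))

lemma core_cross_bound (E : Finset ε) (ends : ε → V × V) (k : ℕ)
    {C S : Finset V} (hC : IsCore (smallCuts E ends k) C) (hcr : Crosses S C) :
    k + 1 ≤ 2 * deg2 E ends (C ∩ S) (C \ S) := by
  obtain ⟨hCne, hCu, hCk⟩ := hC.1
  have hCS : (C ∩ S).Nonempty := by
    obtain ⟨x, hx⟩ := hcr.1
    exact ⟨x, by simp_all [Finset.mem_inter]⟩
  have hCdS : (C \ S).Nonempty := hcr.2.2.2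
  have h1 : k ≤ cutDeg E ends (C ∩ S) := by
    by_contra h
    push_neg at h
    have heq : C ∩ S = C := hC.2 _ ⟨hCS, ne_univ_of_subset Finset.inter_subset_left hCu, h⟩
      Finset.inter_subset_left
    obtain ⟨x, hx⟩ := hCdS
    rw [← heq, Finset.mem_sdiff, Finset.mem_inter] at hx
    exact hx.2 hx.1.2
  have h2 : k ≤ cutDeg E ends (C \ S) := by
    by_contra h
    push_neg at h
    have heq : C \ S = C := hC.2 _ ⟨hCdS, ne_univ_of_subset (Finset.sdiff_subset) hCu, h⟩
      (Finset.sdiff_subset)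
    obtain ⟨x, hx⟩ := hCS
    rw [← heq, Finset.mem_inter, Finset.mem_sdiff] at hx
    exact hx.1.2 hx.2
  have := key_identity E ends C S
  omega

lemma cores_disjoint (E : Finset ε) (ends : ε → V × V) (k : ℕ)
    {C₁ C₂ : Finset V} (h₁ : IsCore (smallCuts E ends k) C₁)
    (h₂ : IsCore (smallCuts E ends k) C₂) (hne : C₁ ≠ C₂) :
    Disjoint C₁ C₂ := by
  classical
  rw [Finset.disjoint_left]
  by_contra h
  push_neg at h
  obtain ⟨x, hx1, hx2⟩ := h
  obtain ⟨hC₁ne, hC₁u, hC₁k⟩ := h₁.1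
  obtain ⟨hC₂ne, hC₂u, hC₂k⟩ := h₂.1
  by_cases hsub : C₁ ⊆ C₂
  · exact hne (h₂.2 _ h₁.1 hsub)
  by_cases hsub' : C₂ ⊆ C₁
  · exact hne ((h₁.2 _ h₂.1 hsub').symm)
  have hA : (C₁ \ C₂).Nonempty := by
    obtain ⟨y, hy1, hy2⟩ := Finset.not_subset.mp hsub
    exact ⟨y, Finset.mem_sdiff.mpr ⟨hy1, hy2⟩⟩
  have hB : (C₂ \ C₁).Nonempty := by
    obtain ⟨y, hy1, hy2⟩ := Finset.not_subset.mp hsub'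
    exact ⟨y, Finset.mem_sdiff.mpr ⟨hy1, hy2⟩⟩
  have h1 : k ≤ cutDeg E ends (C₁ \ C₂) := by
    by_contra h
    push_neg at h
    have heq : C₁ \ C₂ = C₁ := h₁.2 _ ⟨hA, ne_univ_of_subset Finset.sdiff_subset hC₁u, h⟩
      Finset.sdiff_subset
    rw [← heq] at hx1
    exact (Finset.mem_sdiff.mp hx1).2 hx2
  have h2 : k ≤ cutDeg E ends (C₂ \ C₁) := by
    by_contra h
    push_neg at h
    have heq : C₂ \ C₁ = C₂ := h₂.2 _ ⟨hB, ne_univ_of_subset Finset.sdiff_subset hC₂u, h⟩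
      Finset.sdiff_subset
    rw [← heq] at hx2
    exact (Finset.mem_sdiff.mp hx2).2 hx1
  have := posimod E ends C₁ C₂
  omega

theorem stmt4 (E : Finset ε) (ends : ε → V × V) (k : ℕ) (hk : 1 ≤ k)
    (S : Finset V) (hS : S ∈ smallCuts E ends k)
    (C₁ C₂ : Finset V) (h₁ : IsCore (smallCuts E ends k) C₁)
    (h₂ : IsCore (smallCuts E ends k) C₂)
    (hcr₁ : Crosses S C₁) (hcr₂ : Crosses S C₂) :
    C₁ = C₂ := by
  by_contra hne
  have hd := cores_disjoint E ends k h₁ h₂ hne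
  have b1 := core_cross_bound E ends k h₁ hcr₁
  have b2 := core_cross_bound E ends k h₂ hcr₂
  have b3 := two_cores_bound E ends C₁ C₂ S hd
  have hSk := hS.2.2
  omega
end

section
/- Let H be a λ-edge-connected graph on V and F = {S : ∅ ≠ S ⊂ V, d_H(S) < k}. If S ∈ F crosses an F-core C, then 2·d_H(S ∩ C, S \ C) ≥ λ + 1. -/
open Finset

variable {V : Type*} [Fintype V] [DecidableEq V] {ε : Type*} [DecidableEq ε]

theorem stmt5 (E : Finset ε) (ends : ε → V × V) (k lam : ℕ) (hk : 1 ≤ k)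
    (hEC : ∀ S : Finset V, S.Nonempty → S ≠ Finset.univ → lam ≤ cutDeg E ends S)
    (S C : Finset V) (hS : S ∈ smallCuts E ends k)
    (hC : IsCore (smallCuts E ends k) C) (hcr : Crosses S C) :
    lam + 1 ≤ 2 * deg2 E ends (S ∩ C) (S \ C) := by
  obtain ⟨h1, h2, h3, h4⟩ := hcr
  obtain ⟨hSne, hSuniv, hSk⟩ := hS
  -- the submodular-type identity
  have key : cutDeg E ends (S ∩ C) + cutDeg E ends (S \ C)
      = cutDeg E ends S + 2 * deg2 E ends (S ∩ C) (S \ C) := by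
    unfold cutDeg deg2
    simp only [Finset.card_filter]
    rw [← Finset.sum_add_distrib, Finset.mul_sum, ← Finset.sum_add_distrib]
    apply Finset.sum_congr rfl
    intro e _
    by_cases p1 : (ends e).1 ∈ S <;> by_cases p2 : (ends e).1 ∈ C <;>
      by_cases p3 : (ends e).2 ∈ S <;> by_cases p4 : (ends e).2 ∈ C <;>
      simp [Finset.mem_inter, Finset.mem_sdiff, p1, p2, p3, p4]
  -- element outside S ∪ C
  obtain ⟨w, hw⟩ := h2
  rw [Finset.mem_sdiff, Finset.mem_union] at hw
  have hSC_ne_univ : S ∩ C ≠ Finset.univ := by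
    intro h
    have : w ∈ S ∩ C := h ▸ Finset.mem_univ w
    exact hw.2 (Or.inl (Finset.mem_inter.mp this).1)
  have hSdC_ne_univ : S \ C ≠ Finset.univ := by
    intro h
    exact hw.2 (Or.inl ((Finset.mem_sdiff.mp (h ▸ Finset.mem_univ w)).1))
  -- S ∩ C is not a small cut, hence cutDeg ≥ k
  have hInter : k ≤ cutDeg E ends (S ∩ C) := by
    by_contra hlt
    push_neg at hlt
    have hmem : S ∩ C ∈ smallCuts E ends k := ⟨h1, hSC_ne_univ, hlt⟩
    have heq := hC.2 _ hmem Finset.inter_subset_right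
    obtain ⟨x, hx⟩ := h4
    rw [Finset.mem_sdiff] at hx
    have hxm : x ∈ S ∩ C := heq.symm ▸ hx.1
    exact hx.2 (Finset.mem_inter.mp hxm).1
  have hSdC : lam ≤ cutDeg E ends (S \ C) := hEC _ h3 hSdC_ne_univ
  omega
end

section
/- Let H be a λ-edge-connected graph on V and F = {S : ∅ ≠ S ⊂ V, d_H(S) < k}. Then an F-core C crosses at most ⌊(k−1)/⌈(λ+1)/2⌉⌋ pairwise disjoint members of F. (Each crossing disjoint set S_i contributes a set of at least ⌈(λ+1)/2⌉ edges to δ_H(C), and these contributions are pairwise disjoint, while |δ_H(C)| ≤ k − 1.) -/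
open Finset

variable {V : Type*} [Fintype V] [DecidableEq V] {ε : Type*} [DecidableEq ε]

lemma cut_split (E : Finset ε) (ends : ε → V × V) (A B : Finset V)
    (hd : Disjoint A B) :
    cutDeg E ends (A ∪ B) + 2 * deg2 E ends A B = cutDeg E ends A + cutDeg E ends B := by
  have hAB : ∀ x : V, x ∈ A → x ∉ B := fun x hx => Finset.disjoint_left.mp hd hx
  simp only [cutDeg, deg2, Finset.card_filter, Finset.mul_sum, ← Finset.sum_add_distrib]
  refine Finset.sum_congr rfl fun e _ => ?_
  by_cases h1 : (ends e).1 ∈ A <;> by_cases h2 : (ends e).1 ∈ B <;>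
    by_cases h3 : (ends e).2 ∈ A <;> by_cases h4 : (ends e).2 ∈ B <;>
    first
      | exact absurd h2 (hAB _ h1)
      | exact absurd h4 (hAB _ h3)
      | simp [Finset.mem_union, h1, h2, h3, h4]

theorem stmt6 (E : Finset ε) (ends : ε → V × V) (k lam : ℕ) (hk : 1 ≤ k)
    (hEC : ∀ S : Finset V, S.Nonempty → S ≠ Finset.univ → lam ≤ cutDeg E ends S)
    (C : Finset V) (hC : IsCore (smallCuts E ends k) C)
    (P : Finset (Finset V))
    (hPF : ∀ S ∈ P, S ∈ smallCuts E ends k)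
    (hPcr : ∀ S ∈ P, Crosses S C)
    (hPdis : ∀ S ∈ P, ∀ T ∈ P, S ≠ T → Disjoint S T) :
    P.card ≤ (k - 1) / ((lam + 2) / 2) := by
  classical
  obtain ⟨⟨hCne, hCuniv, hCk⟩, hmin⟩ := hC
  have key : ∀ S ∈ P, (lam + 2) / 2 ≤ deg2 E ends (S ∩ C) (S \ C) := by
    intro S hS
    obtain ⟨hSne, hSuniv, hSk⟩ := hPF S hS
    obtain ⟨h1, h2, h3, h4⟩ := hPcr S hS
    have hdisj : Disjoint (S ∩ C) (S \ C) := by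
      rw [Finset.disjoint_left]
      intro x hx hx'
      exact (Finset.mem_sdiff.mp hx').2 (Finset.mem_inter.mp hx).2
    have hAk : k ≤ cutDeg E ends (S ∩ C) := by
      by_contra h
      push_neg at h
      have hAuniv : S ∩ C ≠ Finset.univ := by
        intro he
        obtain ⟨x, hx⟩ := h2
        rw [Finset.mem_sdiff, Finset.mem_union] at hx
        have hx2 : x ∈ S ∩ C := he ▸ Finset.mem_univ x
        exact hx.2 (Or.inl (Finset.mem_inter.mp hx2).1)
      have heq := hmin (S ∩ C) ⟨h1, hAuniv, h⟩ Finset.inter_subset_right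
      obtain ⟨y, hy⟩ := h4
      rw [Finset.mem_sdiff] at hy
      have : y ∈ S ∩ C := by rw [heq]; exact hy.1
      exact hy.2 (Finset.mem_inter.mp this).1
    have hBlam : lam ≤ cutDeg E ends (S \ C) := by
      apply hEC _ h3
      intro he
      obtain ⟨x, hx⟩ := h1
      have hx2 : x ∈ S \ C := he ▸ Finset.mem_univ x
      exact (Finset.mem_sdiff.mp hx2).2 (Finset.mem_inter.mp hx).2
    have hsplit := cut_split E ends (S ∩ C) (S \ C) hdisj
    have hun : S ∩ C ∪ S \ C = S := by
      ext x
      simp only [Finset.mem_union, Finset.mem_inter, Finset.mem_sdiff]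
      tauto
    rw [hun] at hsplit
    omega
  -- sum of the crossing edge sets is at most cutDeg C
  set f : Finset V → Finset ε := fun S =>
    E.filter (fun e => ((ends e).1 ∈ S ∩ C ∧ (ends e).2 ∈ S \ C) ∨
      ((ends e).1 ∈ S \ C ∧ (ends e).2 ∈ S ∩ C)) with hf
  have hcard : ∀ S, deg2 E ends (S ∩ C) (S \ C) = (f S).card := fun S => rfl
  have hdisjf : ∀ S ∈ P, ∀ T ∈ P, S ≠ T → Disjoint (f S) (f T) := by
    intro S hS T hT hST
    rw [Finset.disjoint_left]
    intro e heS heT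
    simp only [hf, Finset.mem_filter, Finset.mem_inter, Finset.mem_sdiff] at heS heT
    have h1S : (ends e).1 ∈ S := by tauto
    have h1T : (ends e).1 ∈ T := by tauto
    exact Finset.disjoint_left.mp (hPdis S hS T hT hST) h1S h1T
  have hsub : P.biUnion f ⊆ E.filter (fun e =>
      ((ends e).1 ∈ C ∧ (ends e).2 ∉ C) ∨ ((ends e).2 ∈ C ∧ (ends e).1 ∉ C)) := by
    intro e he
    obtain ⟨S, hS, heS⟩ := Finset.mem_biUnion.mp he
    simp only [hf, Finset.mem_filter, Finset.mem_inter, Finset.mem_sdiff] at heS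
    rw [Finset.mem_filter]
    exact ⟨heS.1, by tauto⟩
  have hsum : ∑ S ∈ P, deg2 E ends (S ∩ C) (S \ C) ≤ cutDeg E ends C := by
    calc ∑ S ∈ P, deg2 E ends (S ∩ C) (S \ C) = ∑ S ∈ P, (f S).card := by
          simp [hcard]
      _ = (P.biUnion f).card := (Finset.card_biUnion hdisjf).symm
      _ ≤ _ := Finset.card_le_card hsub
  have hmul : P.card * ((lam + 2) / 2) ≤ cutDeg E ends C := by
    calc P.card * ((lam + 2) / 2) ≤ ∑ S ∈ P, deg2 E ends (S ∩ C) (S \ C) := by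
          simpa [mul_comm] using Finset.card_nsmul_le_sum P _ _ key
      _ ≤ _ := hsum
  have hpos : 0 < (lam + 2) / 2 := by omega
  rw [Nat.le_div_iff_mul_le hpos]
  omega
end
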